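/- arXiv:1807.00384 — 9 statements merged into one kernel-verified Lean document; each statement's English description precedes it below -/
import Mathlib

section
/- A subgroup H of a finite group G is pronormal in G if and only if for every transitive action of G on a finite set, the normalizer N_G(H) acts transitively on the set of fixed points of H. -/
/-!
If `g • ω₁ = ω₂` and `H` fixes both points, then `H` and `H^g` both fix `ω₂`; pronormality
provides `k ∈ ⟨H, H^g⟩` with `H^k = H^g`, and `k⁻¹ g` normalizes `H` and still maps `ω₁` to `ω₂`.
Conversely, on the coset space `G ⧸ ⟨H, H^g⟩` the subgroup `H` fixes both the trivial coset and
the coset of `g⁻¹`, and an element of `N_G(H)` moving one to the other supplies the conjugating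
element.
-/

open Pointwise

/-- `H` is pronormal in `G`: for every `g`, `H` and `H^g` are conjugate in `⟨H, H^g⟩`. -/
def Pronormal {G : Type*} [Group G] (H : Subgroup G) : Prop :=
  ∀ g : G, ∃ k ∈ (H ⊔ MulAut.conj g • H : Subgroup G),
    MulAut.conj k • H = MulAut.conj g • H

open MulAction Subgroup

instance Shrink.isPretransitive {M α : Type*} [Monoid M] [MulAction M α] [Small α]
    [IsPretransitive M α] : IsPretransitive M (Shrink α) where
  exists_smul_eq x y := by
    obtain ⟨g, hg⟩ := exists_smul_eq M ((equivShrink α).symm x) ((equivShrink α).symm y)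
    exact ⟨g, (equivShrink α).symm.injective (by rw [equivShrink_symm_smul, hg])⟩

section

variable {G : Type*} [Group G]

theorem Subgroup.conj_smul_eq_self_iff_mem_normalizer {H : Subgroup G} {g : G} :
    MulAut.conj g • H = H ↔ g ∈ normalizer (H : Set G) :=
  mem_normalizer_iff_map_conj_eq.symm

theorem MulAction.conj_smul_le_stabilizer_smul {Ω : Type*} [MulAction G Ω] {H : Subgroup G}
    {ω : Ω} (hH : H ≤ stabilizer G ω) (g : G) :
    MulAut.conj g • H ≤ stabilizer G (g • ω) := by
  rw [stabilizer_smul_eq_stabilizer_map_conj]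
  exact map_mono hH

theorem MulAction.stabilizer_quotient_mk (K : Subgroup G) (x : G) :
    stabilizer G (x : G ⧸ K) = MulAut.conj x • K := by
  have h := stabilizer_smul_eq_stabilizer_map_conj x ((1 : G) : G ⧸ K)
  rwa [stabilizer_quotient, Quotient.smul_mk, smul_eq_mul, mul_one] at h

theorem pronormal_iff_exists_mem_normalizer_mul_mem {H : Subgroup G} :
    Pronormal H ↔ ∀ g : G, ∃ n ∈ normalizer (H : Set G), g * n ∈ H ⊔ MulAut.conj g • H := by
  refine forall_congr' fun g => ⟨fun ⟨k, hk, hkH⟩ => ⟨g⁻¹ * k, ?_, by simpa⟩,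
    fun ⟨n, hn, hgn⟩ => ⟨g * n, hgn, ?_⟩⟩
  · rw [← conj_smul_eq_self_iff_mem_normalizer, map_mul, mul_smul, hkH, map_inv, inv_smul_smul]
  · rw [map_mul, mul_smul, conj_smul_eq_self_iff_mem_normalizer.mpr hn]

theorem Pronormal.exists_mem_normalizer_smul_eq {H : Subgroup G} (hH : Pronormal H)
    {Ω : Type*} [MulAction G Ω] {ω₁ ω₂ : Ω} (h₁ : H ≤ stabilizer G ω₁)
    (h₂ : H ≤ stabilizer G ω₂) {g : G} (hg : g • ω₁ = ω₂) :
    ∃ n ∈ normalizer (H : Set G), n • ω₁ = ω₂ := by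
  obtain ⟨n, hn, hgn⟩ := pronormal_iff_exists_mem_normalizer_mul_mem.mp hH g
  have hfix : (g * n) • ω₂ = ω₂ :=
    sup_le h₂ (hg ▸ conj_smul_le_stabilizer_smul h₁ g) hgn
  refine ⟨n⁻¹, inv_mem hn, ?_⟩
  rw [inv_smul_eq_iff, ← smul_left_cancel_iff g, ← mul_smul, hfix, hg]

theorem pronormal_of_forall_quotient {H : Subgroup G}
    (h : ∀ g : G, ∀ ω₁ ω₂ : G ⧸ (H ⊔ MulAut.conj g • H), H ≤ stabilizer G ω₁ →
      H ≤ stabilizer G ω₂ → ∃ n ∈ normalizer (H : Set G), n • ω₁ = ω₂) :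
    Pronormal H := by
  refine pronormal_iff_exists_mem_normalizer_mul_mem.mpr fun g => ?_
  have h₁ : H ≤ stabilizer G ((1 : G) : G ⧸ (H ⊔ MulAut.conj g • H)) := by simp
  have h₂ : H ≤ stabilizer G ((g⁻¹ : G) : G ⧸ (H ⊔ MulAut.conj g • H)) := by
    rw [stabilizer_quotient_mk, subset_pointwise_smul_iff, ← map_inv, inv_inv]
    exact le_sup_right
  obtain ⟨n, hn, hn'⟩ := h g _ _ h₁ h₂
  refine ⟨n, hn, ?_⟩
  rw [Quotient.smul_mk, QuotientGroup.eq, smul_eq_mul, mul_one, ← mul_inv_rev] at hn'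
  exact inv_mem_iff.mp hn'

end

theorem pronormal_iff_normalizer_transitive_on_fixedPoints
    {G : Type*} [Group G] [Finite G] (H : Subgroup G) :
    Pronormal H ↔
      ∀ (Ω : Type) [Finite Ω] [MulAction G Ω], MulAction.IsPretransitive G Ω →
        ∀ ω₁ ω₂ : Ω, (∀ h ∈ H, h • ω₁ = ω₁) → (∀ h ∈ H, h • ω₂ = ω₂) →
          ∃ n ∈ Subgroup.normalizer (H : Set G), n • ω₁ = ω₂ := by
  constructor
  · intro hH Ω _ _ _ ω₁ ω₂ h₁ h₂
    obtain ⟨g, hg⟩ := exists_smul_eq G ω₁ ω₂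
    exact hH.exists_mem_normalizer_smul_eq h₁ h₂ hg
  · intro h
    refine pronormal_of_forall_quotient fun g ω₁ ω₂ h₁ h₂ => ?_
    -- `G ⧸ K` lives in the universe of `G`, while the hypothesis only speaks about `Type`.
    let e := equivShrink.{0} (G ⧸ (H ⊔ MulAut.conj g • H))
    obtain ⟨n, hn, hn'⟩ := h _ inferInstance (e ω₁) (e ω₂)
      (fun k hk => by rw [← equivShrink_smul, h₁ hk])
      (fun k hk => by rw [← equivShrink_smul, h₂ hk])
    exact ⟨n, hn, e.injective (by rw [equivShrink_smul, hn'])⟩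
end

section
/- Let G be a finite group, A a normal subgroup of G, and H a subgroup of A. Then H is pronormal in G if and only if H is pronormal in A and G = A·N_G(H). -/
/-!
Since `A` is normal, every join `H ⊔ H^g` lies in `A`. Hence pronormality of `H` at an element
`a ∈ A` means the same in `A` as in `G`, and a conjugating element `k ∈ A` with `H^k = H^g`
exhibits `g = k (k⁻¹ g)` in `A N_G(H)`. Conversely `H^(a n) = H^a` for `n ∈ N_G(H)`, so a witness
for `a` also serves for `a n`.
-/

open Pointwise

namespace Subgroup

variable {G : Type*} [Group G]

theorem conj_smul_eq_self_iff_mem_normalizer_s1 {H : Subgroup G} {g : G} :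
    MulAut.conj g • H = H ↔ g ∈ normalizer (H : Set G) :=
  mem_normalizer_iff_map_conj_eq.symm

theorem conj_smul_le_of_le_of_normal {H A : Subgroup G} [A.Normal] (hHA : H ≤ A) (g : G) :
    MulAut.conj g • H ≤ A :=
  Normal.conj_smul_eq_self g A ▸ pointwise_smul_le_pointwise_smul_iff.2 hHA

theorem conj_mul_smul_of_mem_normalizer {H : Subgroup G} (g : G) {n : G}
    (hn : n ∈ normalizer (H : Set G)) : MulAut.conj (g * n) • H = MulAut.conj g • H := by
  rw [map_mul, mul_smul, conj_smul_eq_self_iff_mem_normalizer_s1.2 hn]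

theorem mem_mul_normalizer_of_conj_smul_eq {H K : Subgroup G} {g k : G} (hk : k ∈ K)
    (hkg : MulAut.conj k • H = MulAut.conj g • H) :
    g ∈ (K : Set G) * normalizer (H : Set G) := by
  refine ⟨k, hk, k⁻¹ * g, ?_, mul_inv_cancel_left k g⟩
  rw [SetLike.mem_coe, ← conj_smul_eq_self_iff_mem_normalizer_s1, map_mul, map_inv, mul_smul, ← hkg,
    inv_smul_smul]

theorem mem_sup_conj_smul_subgroupOf_iff {H A : Subgroup G} (hHA : H ≤ A) (a k : A) :
    k ∈ H.subgroupOf A ⊔ MulAut.conj a • H.subgroupOf A ↔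
      (k : G) ∈ H ⊔ MulAut.conj (a : G) • H := by
  rw [conj_smul_subgroupOf hHA, ← subgroupOf_sup hHA (conj_smul_le_of_le hHA a), mem_subgroupOf]

theorem conj_smul_subgroupOf_eq_iff {H A : Subgroup G} (hHA : H ≤ A) (a k : A) :
    MulAut.conj k • H.subgroupOf A = MulAut.conj a • H.subgroupOf A ↔
      MulAut.conj (k : G) • H = MulAut.conj (a : G) • H := by
  rw [conj_smul_subgroupOf hHA, conj_smul_subgroupOf hHA, subgroupOf_inj,
    inf_of_le_left (conj_smul_le_of_le hHA k), inf_of_le_left (conj_smul_le_of_le hHA a)]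

end Subgroup

open Subgroup

theorem pronormal_subgroupOf_iff {G : Type*} [Group G] {H A : Subgroup G} (hHA : H ≤ A) :
    Pronormal (H.subgroupOf A) ↔
      ∀ a ∈ A, ∃ k ∈ H ⊔ MulAut.conj a • H, MulAut.conj k • H = MulAut.conj a • H := by
  refine ⟨fun hpro a ha => ?_, fun hpro a => ?_⟩
  · obtain ⟨k, hk, hka⟩ := hpro ⟨a, ha⟩
    exact ⟨k, (mem_sup_conj_smul_subgroupOf_iff hHA ⟨a, ha⟩ k).1 hk,
      (conj_smul_subgroupOf_eq_iff hHA ⟨a, ha⟩ k).1 hka⟩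
  · obtain ⟨k, hk, hka⟩ := hpro a a.2
    have hkA : k ∈ A := sup_le hHA (conj_smul_le_of_le hHA a) hk
    exact ⟨⟨k, hkA⟩, (mem_sup_conj_smul_subgroupOf_iff hHA a ⟨k, hkA⟩).2 hk,
      (conj_smul_subgroupOf_eq_iff hHA a ⟨k, hkA⟩).2 hka⟩

theorem pronormal_iff_pronormal_in_normal_and_frattini_general
    {G : Type*} [Group G] (A : Subgroup G) [A.Normal]
    (H : Subgroup G) (hHA : H ≤ A) :
    Pronormal H ↔ Pronormal (H.subgroupOf A) ∧ (A : Set G) * (Subgroup.normalizer (H : Set G) : Set G) = Set.univ := by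
  rw [pronormal_subgroupOf_iff hHA, Set.eq_univ_iff_forall]
  constructor
  · intro hpro
    refine ⟨fun a _ => hpro a, fun g => ?_⟩
    obtain ⟨k, hk, hkg⟩ := hpro g
    exact mem_mul_normalizer_of_conj_smul_eq
      (sup_le hHA (conj_smul_le_of_le_of_normal hHA g) hk) hkg
  · rintro ⟨hpro, hfrattini⟩ g
    obtain ⟨a, ha, n, hn, rfl⟩ := hfrattini g
    rw [conj_mul_smul_of_mem_normalizer a hn]
    exact hpro a ha

theorem pronormal_iff_pronormal_in_normal_and_frattini
    {G : Type*} [Group G] [Finite G] (A : Subgroup G) [A.Normal]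
    (H : Subgroup G) (hHA : H ≤ A) :
    Pronormal H ↔ Pronormal (H.subgroupOf A) ∧ (A : Set G) * (Subgroup.normalizer (H : Set G) : Set G) = Set.univ :=
  pronormal_iff_pronormal_in_normal_and_frattini_general A H hHA
end

section
/- Let G be a finite group, A a normal subgroup of G, and H a subgroup of A. Then H is pronormal in G if and only if H is pronormal in A and the G-conjugacy class of H equals the A-conjugacy class of H (i.e., H^A = H^G as sets of subgroups). -/
open Pointwise

/-! Conjugation by `a ∈ A` commutes with `subgroupOf A`, so pronormality in `A` is pronormality
tested only at elements of `A`. Since `A` is normal, `⟨H, H^g⟩ ≤ A` for every `g`, so pronormality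
in `G` supplies conjugating elements in `A`; conversely, once every `H^g` is some `H^a` with
`a ∈ A`, testing at elements of `A` suffices. -/

namespace Subgroup

variable {G : Type*} [Group G]

theorem pronormal_subgroupOf_iff {H A : Subgroup G} (hHA : H ≤ A) :
    Pronormal (H.subgroupOf A) ↔
      ∀ a ∈ A, ∃ k ∈ H ⊔ MulAut.conj a • H, MulAut.conj k • H = MulAut.conj a • H := by
  have hle (a : A) : MulAut.conj (a : G) • H ≤ A := conj_smul_le_of_le hHA a
  have hsup (a : A) :
      H.subgroupOf A ⊔ MulAut.conj a • H.subgroupOf A =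
        (H ⊔ MulAut.conj (a : G) • H).subgroupOf A := by
    rw [conj_smul_subgroupOf hHA, subgroupOf_sup hHA (hle a)]
  have hconj (a b : A) :
      MulAut.conj a • H.subgroupOf A = MulAut.conj b • H.subgroupOf A ↔
        MulAut.conj (a : G) • H = MulAut.conj (b : G) • H := by
    rw [conj_smul_subgroupOf hHA, conj_smul_subgroupOf hHA, subgroupOf_inj,
      inf_of_le_left (hle a), inf_of_le_left (hle b)]
  constructor
  · intro hp a ha
    obtain ⟨k, hk, hkH⟩ := hp ⟨a, ha⟩
    rw [hsup] at hk
    exact ⟨k, hk, (hconj k ⟨a, ha⟩).mp hkH⟩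
  · intro hp a
    obtain ⟨k, hk, hkH⟩ := hp a a.2
    have hkA : k ∈ A := sup_le hHA (hle a) hk
    refine ⟨⟨k, hkA⟩, ?_, (hconj ⟨k, hkA⟩ a).mpr hkH⟩
    rw [hsup]
    exact hk

end Subgroup

theorem pronormal_iff_pronormal_in_normal_and_conjClasses_eq_general
    {G : Type*} [Group G] (A : Subgroup G) [A.Normal]
    (H : Subgroup G) (hHA : H ≤ A) :
    Pronormal H ↔ Pronormal (H.subgroupOf A) ∧
      ∀ g : G, ∃ a ∈ A, MulAut.conj a • H = MulAut.conj g • H := by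
  rw [Subgroup.pronormal_subgroupOf_iff hHA]
  constructor
  · intro hp
    refine ⟨fun a _ => hp a, fun g => ?_⟩
    obtain ⟨k, hk, hkH⟩ := hp g
    exact ⟨k, sup_le hHA (Subgroup.conj_smul_le_of_le_of_normal hHA g) hk, hkH⟩
  · rintro ⟨hp, hconj⟩ g
    obtain ⟨a, ha, hag⟩ := hconj g
    rw [← hag]
    exact hp a ha

theorem pronormal_iff_pronormal_in_normal_and_conjClasses_eq
    {G : Type*} [Group G] [Finite G] (A : Subgroup G) [A.Normal]
    (H : Subgroup G) (hHA : H ≤ A) :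
    Pronormal H ↔ Pronormal (H.subgroupOf A) ∧
      ∀ g : G, ∃ a ∈ A, MulAut.conj a • H = MulAut.conj g • H :=
  pronormal_iff_pronormal_in_normal_and_conjClasses_eq_general A H hHA
end

section
/- Let G be a finite group and H a subgroup containing a Sylow p-subgroup S of G. Then H is pronormal in G if and only if for every g ∈ N_G(S), the subgroups H and H^g are conjugate in ⟨H, H^g⟩. -/
open Pointwise

/-!
By a Frattini argument inside `M = ⟨H, H^g⟩`: both `S` and `S^g` are Sylow subgroups of `M`, so
some `x ∈ M` conjugates `S^g` back to `S`, i.e. `xg ∈ N_G(S)`. Since `x ∈ M`, we have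
`⟨H, H^{xg}⟩ ≤ M`, and a conjugating element `k` for `H` and `H^{xg}` yields the conjugating
element `x⁻¹k ∈ M` for `H` and `H^g`.
-/

namespace Subgroup

variable {G : Type*} [Group G]

def IsConjInJoin (H : Subgroup G) (g : G) : Prop :=
  ∃ k ∈ H ⊔ MulAut.conj g • H, MulAut.conj k • H = MulAut.conj g • H

theorem sup_conj_mul_le_sup_conj {H : Subgroup G} {g x : G} (hx : x ∈ H ⊔ MulAut.conj g • H) :
    H ⊔ MulAut.conj (x * g) • H ≤ H ⊔ MulAut.conj g • H := by
  refine sup_le le_sup_left ?_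
  rw [map_mul, mul_smul]
  exact conj_smul_le_of_le le_sup_right ⟨x, hx⟩

theorem IsConjInJoin.of_mul_left {H : Subgroup G} {g x : G} (hx : x ∈ H ⊔ MulAut.conj g • H)
    (h : H.IsConjInJoin (x * g)) : H.IsConjInJoin g := by
  obtain ⟨k, hk, hkH⟩ := h
  refine ⟨x⁻¹ * k, mul_mem (inv_mem hx) (sup_conj_mul_le_sup_conj hx hk), ?_⟩
  rw [map_mul, mul_smul, hkH, ← mul_smul, ← map_mul, inv_mul_cancel_left]

end Subgroup

namespace Sylow

variable {G : Type*} [Group G] [Finite G] {p : ℕ} [Fact p.Prime]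

theorem exists_mem_mul_mem_normalizer_of_le (S : Sylow p G) {K : Subgroup G} {g : G}
    (hS : (S : Subgroup G) ≤ K) (hgS : ((g • S : Sylow p G) : Subgroup G) ≤ K) :
    ∃ x ∈ K, x * g ∈ Subgroup.normalizer ((S : Subgroup G) : Set G) := by
  obtain ⟨x, hx⟩ := MulAction.exists_smul_eq K ((g • S).subtype hgS) (S.subtype hS)
  rw [smul_subtype] at hx
  refine ⟨x, x.2, smul_eq_iff_mem_normalizer.mp ?_⟩
  rw [mul_smul]
  exact subtype_injective hx

end Sylow

theorem pronormal_iff_conjugate_for_normalizer_of_sylow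
    {G : Type*} [Group G] [Finite G] {p : ℕ} (hp : p.Prime)
    (S : Sylow p G) (H : Subgroup G) (hSH : (S : Subgroup G) ≤ H) :
    Pronormal H ↔
      ∀ g ∈ Subgroup.normalizer ((S : Subgroup G) : Set G),
        ∃ k ∈ (H ⊔ MulAut.conj g • H : Subgroup G),
          MulAut.conj k • H = MulAut.conj g • H := by
  have : Fact p.Prime := ⟨hp⟩
  refine ⟨fun h g _ => h g, fun h g => ?_⟩
  have hgS : ((g • S : Sylow p G) : Subgroup G) ≤ H ⊔ MulAut.conj g • H :=
    (Subgroup.pointwise_smul_le_pointwise_smul_iff.mpr hSH).trans le_sup_right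
  obtain ⟨x, hx, hxg⟩ := S.exists_mem_mul_mem_normalizer_of_le (hSH.trans le_sup_left) hgS
  exact Subgroup.IsConjInJoin.of_mul_left hx (h (x * g) hxg)
end

section
/- Let G be a finite group, H and M subgroups of G with H ≤ M. Suppose H contains a Sylow p-subgroup S of G, N_G(S) ≤ M, and H is pronormal in M. Then H is pronormal in G. -/
/- Let `L = ⟨H, H^g⟩`. Both `S` and `S^g` are Sylow subgroups of `L`, so some `x ∈ L` conjugates
`S^g` back to `S`; then `xg ∈ N_G(S) ≤ M`, and pronormality of `H` in `M` conjugates `H` to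
`H^{xg}` inside `⟨H, H^{xg}⟩ ≤ L`. Undoing `x` conjugates `H` to `H^g` inside `L`. -/

open Pointwise

open Subgroup

section

variable {G : Type*} [Group G]

/-- `Pronormal H` unfolds to `∀ g, IsConjugateInSup H (MulAut.conj g • H)`. -/
def IsConjugateInSup (H K : Subgroup G) : Prop :=
  ∃ k ∈ H ⊔ K, MulAut.conj k • H = K

theorem IsConjugateInSup.of_conj_smul {H K : Subgroup G} {x : G} (hx : x ∈ H ⊔ K)
    (h : IsConjugateInSup H (MulAut.conj x • K)) : IsConjugateInSup H K := by
  obtain ⟨k, hk, hkH⟩ := h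
  have hsup : H ⊔ MulAut.conj x • K ≤ H ⊔ K :=
    sup_le le_sup_left (conj_smul_le_of_le le_sup_right ⟨x, hx⟩)
  refine ⟨x⁻¹ * k, mul_mem (inv_mem hx) (hsup hk), ?_⟩
  rw [map_mul, mul_smul, hkH, map_inv, inv_smul_smul]

theorem Pronormal.isConjugateInSup_of_subgroupOf {H M : Subgroup G} (hHM : H ≤ M)
    (h : Pronormal (H.subgroupOf M)) {m : G} (hm : m ∈ M) :
    IsConjugateInSup H (MulAut.conj m • H) := by
  obtain ⟨k, hk, hkH⟩ := h ⟨m, hm⟩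
  have hmH : MulAut.conj m • H ≤ M := conj_smul_le_of_le hHM ⟨m, hm⟩
  rw [conj_smul_subgroupOf hHM, ← subgroupOf_sup hHM hmH, mem_subgroupOf] at hk
  rw [conj_smul_subgroupOf hHM, conj_smul_subgroupOf hHM, subgroupOf_inj,
    inf_of_le_left (conj_smul_le_of_le hHM k), inf_of_le_left hmH] at hkH
  exact ⟨k, hk, hkH⟩

theorem Sylow.exists_mem_mul_mem_normalizer {p : ℕ} [Fact p.Prime] [Finite G] (P : Sylow p G)
    {L : Subgroup G} {g : G} (hP : (P : Subgroup G) ≤ L)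
    (hgP : MulAut.conj g • (P : Subgroup G) ≤ L) :
    ∃ x ∈ L, x * g ∈ normalizer (P : Set G) := by
  rw [← Sylow.coe_subgroup_smul] at hgP
  obtain ⟨x, hx⟩ := MulAction.exists_smul_eq L ((g • P).subtype hgP) (P.subtype hP)
  rw [Sylow.smul_subtype] at hx
  refine ⟨x, x.2, Sylow.smul_eq_iff_mem_normalizer.mp ?_⟩
  rw [mul_smul]
  exact Sylow.subtype_injective hx

end

theorem pronormal_of_pronormal_in_overgroup_of_sylow_normalizer
    {G : Type*} [Group G] [Finite G] (H M : Subgroup G) (hHM : H ≤ M)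
    {p : ℕ} (hp : p.Prime) (S : Sylow p G) (hSH : (S : Subgroup G) ≤ H)
    (hNM : Subgroup.normalizer ((S : Subgroup G) : Set G) ≤ M)
    (h : Pronormal (H.subgroupOf M)) : Pronormal H := by
  have : Fact p.Prime := ⟨hp⟩
  intro g
  obtain ⟨x, hx, hxg⟩ := S.exists_mem_mul_mem_normalizer (hSH.trans le_sup_left)
    ((pointwise_smul_le_pointwise_smul_iff.mpr hSH).trans le_sup_right)
  refine IsConjugateInSup.of_conj_smul hx ?_
  rw [← mul_smul, ← map_mul]
  exact h.isConjugateInSup_of_subgroupOf hHM (hNM hxg)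
end

section
/- Let G be a finite group with an abelian normal subgroup V and a subgroup H such that G = HV. Then H is pronormal in G if and only if U = N_U(H)·[H, U] for every H-invariant subgroup U of V. -/
open Pointwise

/-!
For `u ∈ U`, pronormality gives `k ∈ ⟨H, H^u⟩` with `H^k = H^u`. Since `H^u ≤ [H, U] H` and `H`
normalizes `[H, U]`, we may write `k = w h` with `w ∈ [H, U]`, `h ∈ H`; then `w⁻¹ u ∈ N_U(H)` and,
`U` being abelian, `u = (w⁻¹ u) w`.

Conversely, write `g = v h` with `v ∈ V`, `h ∈ H`, so that `H^g = H^v`, and put `D = ⟨H, H^v⟩`.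
As `V` is abelian and normal, the elements of `V` commuting with `H` modulo `D` form an
`H`-invariant subgroup `T`, which contains `v` because `[a, v] = a · (a⁻¹)^v`. Decomposing
`v = n w` with `n ∈ N_T(H)` and `w ∈ [H, T] ≤ D` gives `H^v = H^(w n) = H^w`.
-/

open Subgroup
open scoped commutatorElement

namespace Subgroup
variable {G : Type*} [Group G]

theorem conj_smul_eq_self_iff {g : G} {H : Subgroup G} :
    MulAut.conj g • H = H ↔ g ∈ normalizer (H : Set G) :=
  conjAct_pointwise_smul_iff

theorem conj_smul_eq_conj_smul_iff {a b : G} {H : Subgroup G} :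
    MulAut.conj a • H = MulAut.conj b • H ↔ a⁻¹ * b ∈ normalizer (H : Set G) := by
  rw [← conj_smul_eq_self_iff, map_mul, mul_smul, map_inv, inv_smul_eq_iff, eq_comm]

theorem forall_conj_smul_eq_self_iff_le_normalizer {H U : Subgroup G} :
    (∀ h ∈ H, MulAut.conj h • U = U) ↔ H ≤ normalizer (U : Set G) := by
  simp only [conj_smul_eq_self_iff]
  rfl

theorem sup_conj_smul_le_commutator_sup {H U : Subgroup G} {u : G} (hu : u ∈ U) :
    H ⊔ MulAut.conj u • H ≤ ⁅H, U⁆ ⊔ H := by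
  refine sup_le le_sup_right ?_
  intro x hx
  obtain ⟨h, hh, rfl⟩ := (mem_smul_pointwise_iff_exists _ _ _).mp hx
  have hconj : MulAut.conj u • h = ⁅u, h⁆ * h := by
    simp [commutatorElement_def]
  rw [hconj]
  exact mul_mem (mem_sup_left (commutator_comm U H ▸ commutator_mem_commutator hu hh))
    (mem_sup_right hh)

theorem commutatorElement_mem_of_normal {N : Subgroup G} [N.Normal] (g : G) {x : G} (hx : x ∈ N) :
    ⁅g, x⁆ ∈ N :=
  commutator_le_right ⊤ N (commutator_mem_commutator (mem_top g) hx)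

def centralizerMod (V H D : Subgroup G) [V.Normal] (hV : ∀ x ∈ V, ∀ y ∈ V, x * y = y * x) :
    Subgroup G where
  carrier := {x | x ∈ V ∧ ∀ a ∈ H, ⁅a, x⁆ ∈ D}
  one_mem' := ⟨V.one_mem, fun a _ => by simp [D.one_mem]⟩
  mul_mem' := by
    rintro x y ⟨hxV, hx⟩ ⟨hyV, hy⟩
    refine ⟨V.mul_mem hxV hyV, fun a ha => ?_⟩
    have hxy : ⁅a, x * y⁆ = ⁅a, x⁆ * (x * ⁅a, y⁆ * x⁻¹) := by
      simp only [commutatorElement_def]; group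
    rw [hxy, hV _ hxV _ (commutatorElement_mem_of_normal a hyV), mul_inv_cancel_right]
    exact D.mul_mem (hx a ha) (hy a ha)
  inv_mem' := by
    rintro x ⟨hxV, hx⟩
    refine ⟨V.inv_mem hxV, fun a ha => ?_⟩
    have haxV : ⁅a, x⁆⁻¹ ∈ V := V.inv_mem (commutatorElement_mem_of_normal a hxV)
    have hxinv : ⁅a, x⁻¹⁆ = x⁻¹ * ⁅a, x⁆⁻¹ * x := by
      simp only [commutatorElement_def]; group
    rw [hxinv, hV _ (V.inv_mem hxV) _ haxV, inv_mul_cancel_right]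
    exact D.inv_mem (hx a ha)

variable {V H D : Subgroup G} [V.Normal] {hV : ∀ x ∈ V, ∀ y ∈ V, x * y = y * x}

theorem centralizerMod_le : centralizerMod V H D hV ≤ V := fun _ hx => hx.1

theorem commutator_centralizerMod_le : ⁅H, centralizerMod V H D hV⁆ ≤ D :=
  commutator_le.mpr fun a ha _ hx => hx.2 a ha

theorem conj_mem_centralizerMod {b x : G} (hb : b ∈ H) (hx : x ∈ centralizerMod V H D hV) :
    b * x * b⁻¹ ∈ centralizerMod V H D hV := by
  refine ⟨‹V.Normal›.conj_mem x hx.1 b, fun a ha => ?_⟩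
  have hconj : ⁅a, b * x * b⁻¹⁆ = ⁅a * b, x⁆ * ⁅b, x⁆⁻¹ := by
    simp only [commutatorElement_def]; group
  rw [hconj]
  exact D.mul_mem (hx.2 _ (H.mul_mem ha hb)) (D.inv_mem (hx.2 b hb))

theorem le_normalizer_centralizerMod :
    H ≤ normalizer ((centralizerMod V H D hV : Subgroup G) : Set G) :=
  le_normalizer_iff_commutator_le_right.mpr <| commutator_le.mpr fun _ hb _ hx =>
    mul_mem (conj_mem_centralizerMod hb hx) (inv_mem hx)

theorem mem_centralizerMod_sup_conj_smul {v : G} (hv : v ∈ V) :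
    v ∈ centralizerMod V H (H ⊔ MulAut.conj v • H) hV := by
  refine ⟨hv, fun a ha => ?_⟩
  have hcomm : ⁅a, v⁆ = a * MulAut.conj v • a⁻¹ := by
    simp [commutatorElement_def, mul_assoc]
  rw [hcomm]
  exact mul_mem (mem_sup_left ha) (mem_sup_right (smul_mem_pointwise_smul _ _ _ (H.inv_mem ha)))

end Subgroup

section
variable {G : Type*} [Group G]

theorem Pronormal.eq_normalizer_mul_commutator {H U : Subgroup G} (hH : Pronormal H)
    (hU : ∀ x ∈ U, ∀ y ∈ U, x * y = y * x) (hHU : H ≤ normalizer (U : Set G)) :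
    (U : Set G) = ((U ⊓ normalizer (H : Set G) : Subgroup G) : Set G) * (⁅H, U⁆ : Subgroup G) := by
  have hWU : ⁅H, U⁆ ≤ U := le_normalizer_iff_commutator_le_right.mp hHU
  have hHW : H ≤ normalizer ((⁅H, U⁆ : Subgroup G) : Set G) :=
    le_normalizer_iff_commutator_le_right.mpr (commutator_mono le_rfl hWU)
  refine subset_antisymm (fun u hu => ?_) ?_
  · obtain ⟨k, hk, hkH⟩ := hH u
    obtain ⟨w, hw, h, hh, rfl⟩ : k ∈ ((⁅H, U⁆ : Subgroup G) : Set G) * H := by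
      rw [← coe_mul_of_right_le_normalizer_left _ _ hHW]
      exact sup_conj_smul_le_commutator_sup hu hk
    rw [map_mul, mul_smul, conj_smul_eq_self_of_mem hh, conj_smul_eq_conj_smul_iff] at hkH
    have hwU : w⁻¹ ∈ U := U.inv_mem (hWU hw)
    refine ⟨w⁻¹ * u, ⟨U.mul_mem hwU hu, hkH⟩, w, hw, ?_⟩
    change w⁻¹ * u * w = u
    rw [hU _ hwU _ hu, inv_mul_cancel_right]
  · rintro - ⟨n, hn, w, hw, rfl⟩
    exact U.mul_mem hn.1 (hWU hw)

theorem pronormal_of_forall_eq_normalizer_mul_commutator {V H : Subgroup G} [V.Normal]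
    (hV : ∀ x ∈ V, ∀ y ∈ V, x * y = y * x) (hHV : (H : Set G) * (V : Set G) = Set.univ)
    (hdec : ∀ U : Subgroup G, U ≤ V → H ≤ normalizer (U : Set G) →
      (U : Set G) = ((U ⊓ normalizer (H : Set G) : Subgroup G) : Set G) * (⁅H, U⁆ : Subgroup G)) :
    Pronormal H := by
  intro g
  obtain ⟨v, hv, h, hh, rfl⟩ : g ∈ (V : Set G) * H := by
    rw [← set_mul_normal_comm, hHV]; trivial
  set T := centralizerMod V H (H ⊔ MulAut.conj v • H) hV
  obtain ⟨n, ⟨hnT, hnH⟩, w, hw, hnw⟩ : v ∈ ((T ⊓ normalizer (H : Set G) : Subgroup G) : Set G) *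
      (⁅H, T⁆ : Subgroup G) := by
    rw [← hdec T centralizerMod_le le_normalizer_centralizerMod]
    exact mem_centralizerMod_sup_conj_smul hv
  replace hnw : n * w = v := hnw
  have hwT : w ∈ T := le_normalizer_iff_commutator_le_right.mp le_normalizer_centralizerMod hw
  have hHv : MulAut.conj (v * h) • H = MulAut.conj v • H := by
    rw [map_mul, mul_smul, conj_smul_eq_self_of_mem hh]
  refine ⟨w, hHv ▸ commutator_centralizerMod_le hw, ?_⟩
  rw [hHv, ← hnw, hV _ (centralizerMod_le hnT) _ (centralizerMod_le hwT),
    map_mul, mul_smul, conj_smul_eq_self_iff.mpr hnH]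

end

theorem pronormal_iff_eq_normalizer_mul_commutator_general
    {G : Type*} [Group G] (V : Subgroup G) [V.Normal]
    (hab : ∀ x ∈ V, ∀ y ∈ V, x * y = y * x)
    (H : Subgroup G) (hGHV : (H : Set G) * (V : Set G) = Set.univ) :
    Pronormal H ↔
      ∀ U : Subgroup G, U ≤ V → (∀ h ∈ H, MulAut.conj h • U = U) →
        (U : Set G) = ((U ⊓ Subgroup.normalizer (H : Set G) : Subgroup G) : Set G) * ((⁅H, U⁆ : Subgroup G) : Set G) := by
  simp only [forall_conj_smul_eq_self_iff_le_normalizer]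
  refine ⟨fun hH U hUV hHU => hH.eq_normalizer_mul_commutator ?_ hHU,
    pronormal_of_forall_eq_normalizer_mul_commutator hab hGHV⟩
  exact fun x hx y hy => hab x (hUV hx) y (hUV hy)

theorem pronormal_iff_eq_normalizer_mul_commutator
    {G : Type*} [Group G] [Finite G] (V : Subgroup G) [V.Normal]
    (hab : ∀ x ∈ V, ∀ y ∈ V, x * y = y * x)
    (H : Subgroup G) (hGHV : (H : Set G) * (V : Set G) = Set.univ) :
    Pronormal H ↔
      ∀ U : Subgroup G, U ≤ V → (∀ h ∈ H, MulAut.conj h • U = U) →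
        (U : Set G) = ((U ⊓ Subgroup.normalizer (H : Set G) : Subgroup G) : Set G) * ((⁅H, U⁆ : Subgroup G) : Set G) :=
  pronormal_iff_eq_normalizer_mul_commutator_general V hab H hGHV
end

section
/- Let G be a finite group, N a normal subgroup of G, and H a subgroup of G with N ≤ H. If H/N is pronormal in G/N, then H is pronormal in G. -/
open Pointwise

/-!
A homomorphism `f` with `ker f ≤ H` maps `H ⊔ H^g` onto `f H ⊔ (f H)^(f g)`, so a conjugating
element for the images lifts to some `k ∈ H ⊔ H^g`. Both `H^k` and `H^g` contain the normal
subgroup `ker f`, and subgroups containing the kernel are determined by their images.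
-/

namespace Subgroup

variable {G Q : Type*} [Group G] [Group Q]

lemma map_conj_smul (f : G →* Q) (g : G) (H : Subgroup G) :
    (MulAut.conj g • H).map f = MulAut.conj (f g) • H.map f := by
  ext x
  simp [pointwise_smul_def]

lemma le_conj_smul_of_normal_le {N H : Subgroup G} [N.Normal] (hNH : N ≤ H) (g : G) :
    N ≤ MulAut.conj g • H := by
  rw [← Normal.conj_smul_eq_self g N]
  exact pointwise_smul_le_pointwise_smul_iff.mpr hNH

end Subgroup

open Subgroup in
theorem Pronormal.of_map {G Q : Type*} [Group G] [Group Q] {H : Subgroup G} (f : G →* Q)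
    (hf : f.ker ≤ H) (h : Pronormal (H.map f)) : Pronormal H := by
  intro g
  obtain ⟨_, hk, hconj⟩ := h (f g)
  rw [← map_conj_smul, ← Subgroup.map_sup] at hk
  obtain ⟨k, hk, rfl⟩ := hk
  refine ⟨k, hk, map_injective_of_ker_le f (le_conj_smul_of_normal_le hf k)
    (le_conj_smul_of_normal_le hf g) ?_⟩
  rw [map_conj_smul, map_conj_smul, hconj]

theorem pronormal_of_pronormal_map_quotient_general
    {G : Type*} [Group G] (N : Subgroup G) [N.Normal]
    (H : Subgroup G) (hNH : N ≤ H)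
    (h : Pronormal (H.map (QuotientGroup.mk' N))) : Pronormal H :=
  h.of_map _ (by rwa [QuotientGroup.ker_mk'])

theorem pronormal_of_pronormal_map_quotient
    {G : Type*} [Group G] [Finite G] (N : Subgroup G) [N.Normal]
    (H : Subgroup G) (hNH : N ≤ H)
    (h : Pronormal (H.map (QuotientGroup.mk' N))) : Pronormal H :=
  pronormal_of_pronormal_map_quotient_general N H hNH h
end

section
/- Let G be a finite group and H a subgroup of odd index in G. Then H is pronormal in G if and only if H/O₂(G) is pronormal in G/O₂(G). -/
/-!
A normal `2`-subgroup `O` lies in every subgroup `H` of odd index: acting on the cosets of `H`,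
the `2`-group `O` has a fixed coset `gH` because `[G : H]` is odd, so `O = O^g ≤ H`. Hence `O` lies
in every conjugate of `H`, and pronormality passes through the surjection `G → G/O` in both
directions because `map` is injective on subgroups containing the kernel.
-/

open Pointwise

section

variable {G G' : Type*} [Group G] [Group G']

theorem IsPGroup.le_of_not_dvd_index {p : ℕ} [Fact p.Prime] {N H : Subgroup G} [hN : N.Normal]
    (hNp : IsPGroup p N) (hH : ¬ p ∣ H.index) : N ≤ H := by
  obtain ⟨x, hx⟩ := hNp.nonempty_fixed_point_of_prime_not_dvd_card (G ⧸ H) hH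
  induction x using QuotientGroup.induction_on with | H g => ?_
  intro n hn
  have hfix := hx ⟨g * n * g⁻¹, hN.conj_mem n hn g⟩
  change ((g * n * g⁻¹ : G) • (g : G ⧸ H)) = g at hfix
  rw [MulAction.Quotient.smul_mk, QuotientGroup.eq] at hfix
  simpa [mul_assoc] using hfix

theorem Subgroup.map_conj_smul_s12 (f : G →* G') (g : G) (H : Subgroup G) :
    (MulAut.conj g • H).map f = MulAut.conj (f g) • H.map f := by
  ext x
  simp only [Subgroup.mem_map, Subgroup.mem_pointwise_smul_iff_inv_smul_mem, MulAut.smul_def,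
    MulAut.inv_apply, MulAut.conj_symm_apply]
  constructor
  · rintro ⟨y, hy, rfl⟩
    exact ⟨_, hy, by simp⟩
  · rintro ⟨z, hz, hzx⟩
    refine ⟨g * z * g⁻¹, by simpa [mul_assoc] using hz, ?_⟩
    simp [hzx, mul_assoc]

namespace Pronormal

theorem map {f : G →* G'} (hf : Function.Surjective f) {H : Subgroup G} (hH : Pronormal H) :
    Pronormal (H.map f) := by
  intro g'
  obtain ⟨g, rfl⟩ := hf g'
  obtain ⟨k, hk, hconj⟩ := hH g
  refine ⟨f k, ?_, ?_⟩
  · rw [← Subgroup.map_conj_smul_s12, ← Subgroup.map_sup]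
    exact Subgroup.mem_map_of_mem f hk
  · rw [← Subgroup.map_conj_smul_s12, ← Subgroup.map_conj_smul_s12, hconj]

theorem of_map_s12 {f : G →* G'} {H : Subgroup G} (hker : f.ker ≤ H) (hH : Pronormal (H.map f)) :
    Pronormal H := by
  have hker_conj (x : G) : f.ker ≤ MulAut.conj x • H := by
    rw [← Subgroup.Normal.conj_smul_eq_self x f.ker]
    exact Subgroup.pointwise_smul_le_pointwise_smul_iff.mpr hker
  intro g
  obtain ⟨k', hk', hconj⟩ := hH (f g)
  rw [← Subgroup.map_conj_smul_s12, ← Subgroup.map_sup] at hk'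
  obtain ⟨k, hk, rfl⟩ := hk'
  refine ⟨k, hk, Subgroup.map_injective_of_ker_le f (hker_conj k) (hker_conj g) ?_⟩
  rw [Subgroup.map_conj_smul_s12, Subgroup.map_conj_smul_s12, hconj]

end Pronormal

theorem pronormal_map_iff {f : G →* G'} (hf : Function.Surjective f) {H : Subgroup G}
    (hker : f.ker ≤ H) : Pronormal (H.map f) ↔ Pronormal H :=
  ⟨Pronormal.of_map_s12 hker, Pronormal.map hf⟩

end

theorem pronormal_iff_pronormal_quotient_O2_general
    {G : Type*} [Group G] (H : Subgroup G) (hodd : Odd H.index)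
    (O : Subgroup G) [O.Normal] (hO2 : IsPGroup 2 O) :
    Pronormal H ↔ Pronormal (H.map (QuotientGroup.mk' O)) := by
  have hOH : O ≤ H := hO2.le_of_not_dvd_index hodd.not_two_dvd_nat
  rw [pronormal_map_iff (QuotientGroup.mk'_surjective O) (by rwa [QuotientGroup.ker_mk'])]

theorem pronormal_iff_pronormal_quotient_O2
    {G : Type*} [Group G] [Finite G] (H : Subgroup G) (hodd : Odd H.index)
    (O : Subgroup G) [O.Normal] (hO2 : IsPGroup 2 O)
    (hOmax : ∀ P : Subgroup G, P.Normal → IsPGroup 2 P → P ≤ O) :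
    Pronormal H ↔ Pronormal (H.map (QuotientGroup.mk' O)) :=
  pronormal_iff_pronormal_quotient_O2_general H hodd O hO2
end

section
/- In the group H = (C₇ ⋊ C₃) × (C₇ ⋊ C₃) (the direct product of two copies of the Frobenius group of order 21), the diagonal subgroup D = {(x, x) : x ∈ C₇} of the normal subgroup C₇ × C₇ is not pronormal in H, even though D has odd index in H. -/
/-!
The Sylow 7-subgroup `P` of a group `K` of order 21 is normal and abelian, so `P × P` is an
abelian normal subgroup of `K × K` containing the diagonal `D` of `P`. A pronormal subgroup of an
abelian normal subgroup is normal: the element conjugating `H` to `H^g` inside `⟨H, H^g⟩` lies in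
the abelian group and hence fixes `H`. But if `D` were normal, conjugating by `(g, 1)` would show
that `P` is central, and then `K` would be abelian, its quotient by `P` being cyclic.
-/

open Pointwise

open Subgroup

instance Subgroup.prod_isMulCommutative {G N : Type*} [Group G] [Group N] (H : Subgroup G)
    (K : Subgroup N) [IsMulCommutative H] [IsMulCommutative K] : IsMulCommutative (H.prod K) :=
  IsMulCommutative.of_setLike_mul_comm fun _ ha _ hb =>
    Prod.ext (setLike_mul_comm (mem_prod.1 ha).1 (mem_prod.1 hb).1)
      (setLike_mul_comm (mem_prod.1 ha).2 (mem_prod.1 hb).2)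

theorem Pronormal.normal_of_le_isMulCommutative {G : Type*} [Group G] {H N : Subgroup G}
    (hH : Pronormal H) [N.Normal] [IsMulCommutative N] (hHN : H ≤ N) : H.Normal := by
  refine Normal.of_conjugate_fixed fun g => ?_
  obtain ⟨k, hk, hkH⟩ := hH g
  have hgHN : MulAut.conj g • H ≤ N := by
    simpa using (pointwise_smul_le_pointwise_smul_iff (a := MulAut.conj g)).2 hHN
  have hk_cent : k ∈ centralizer (H : Set G) :=
    (N.le_centralizer.trans (centralizer_le hHN)) (sup_le hHN hgHN hk)
  rw [← hkH]
  exact conjAct_pointwise_smul_eq_self (centralizer_le_normalizer _ hk_cent)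

section Diagonal

variable {K : Type*} [Group K]

theorem Subgroup.le_center_of_map_diag_normal {P : Subgroup K}
    (h : (P.map ((MonoidHom.id K).prod (MonoidHom.id K))).Normal) : P ≤ center K := by
  intro x hx
  rw [mem_center_iff]
  intro g
  obtain ⟨y, -, hy⟩ := h.conj_mem (x, x) ⟨x, hx, rfl⟩ (g, 1)
  have hconj : g * x * g⁻¹ = x := by
    simpa using (congrArg Prod.fst hy).symm.trans (congrArg Prod.snd hy)
  exact (eq_mul_inv_iff_mul_eq.mp hconj.symm).symm

theorem Subgroup.map_diag_le_prod (P : Subgroup K) :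
    P.map ((MonoidHom.id K).prod (MonoidHom.id K)) ≤ P.prod P := by
  rintro _ ⟨x, hx, rfl⟩
  exact mem_prod.2 ⟨hx, hx⟩

theorem Subgroup.index_map_diag [Finite K] (P : Subgroup K) :
    (P.map ((MonoidHom.id K).prod (MonoidHom.id K))).index = P.index * Nat.card K := by
  have hcard : Nat.card (P.map ((MonoidHom.id K).prod (MonoidHom.id K))) = Nat.card P :=
    card_map_of_injective fun x y h => congrArg Prod.fst h
  have hP := P.index_mul_card
  have hD := (P.map ((MonoidHom.id K).prod (MonoidHom.id K))).index_mul_card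
  rw [hcard, Nat.card_prod] at hD
  refine Nat.eq_of_mul_eq_mul_right (Nat.card_pos (α := P)) ?_
  rw [hD]
  nth_rw 1 [← hP]
  ring

end Diagonal

namespace Sylow

variable {G : Type*} [Group G] [Finite G] {p : ℕ} [hp : Fact p.Prime]

theorem card_eq_self_of_card_eq_mul {m : ℕ} (P : Sylow p G) (hG : Nat.card G = p * m)
    (hm : ¬ p ∣ m) : Nat.card P = p := by
  rw [P.card_eq_multiplicity, hG, Nat.factorization_mul hp.out.ne_zero (by rintro rfl; simp at hm),
    Finsupp.add_apply, hp.out.factorization_self, Nat.factorization_eq_zero_of_not_dvd hm, pow_one]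

theorem normal_of_index_le (P : Sylow p G) (h : P.index ≤ p) : (P : Subgroup G).Normal := by
  have hle : Nat.card (Sylow p G) ≤ p :=
    (Nat.le_of_dvd (Nat.pos_of_ne_zero (P : Subgroup G).index_ne_zero_of_finite)
      P.card_dvd_index).trans h
  have hlt : Nat.card (Sylow p G) < p :=
    hle.lt_of_ne fun heq => not_dvd_card_sylow (p := p) (G := G) (by rw [heq])
  have : Subsingleton (Sylow p G) := (Nat.card_eq_one_iff_unique.mp
    ((card_sylow_modEq_one p G).eq_of_lt_of_lt hlt hp.out.one_lt)).1
  exact P.normal_of_subsingleton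

end Sylow

theorem diagonal_not_pronormal_in_frobenius21_squared
    {K : Type*} [Group K] [Fintype K] (hcard : Fintype.card K = 21)
    (hnab : ∃ a b : K, a * b ≠ b * a) (P : Sylow 7 K) :
    Odd (Subgroup.map ((MonoidHom.id K).prod (MonoidHom.id K)) (P : Subgroup K)).index ∧
      ¬ Pronormal (Subgroup.map ((MonoidHom.id K).prod (MonoidHom.id K)) (P : Subgroup K)) := by
  have : Fact (Nat.Prime 7) := ⟨by norm_num⟩
  have : Fact (Nat.Prime 3) := ⟨by norm_num⟩
  have hK : Nat.card K = 7 * 3 := by rw [Nat.card_eq_fintype_card, hcard]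
  have hcardP : Nat.card P = 7 := P.card_eq_self_of_card_eq_mul hK (by norm_num)
  have hindex : (P : Subgroup K).index = 3 := by
    have := (P : Subgroup K).index_mul_card
    rw [hcardP, hK] at this
    omega
  have : (P : Subgroup K).Normal := P.normal_of_index_le (by omega)
  have : IsCyclic P := isCyclic_of_prime_card hcardP
  refine ⟨by rw [index_map_diag, hindex, hK]; decide, fun hpro => ?_⟩
  have : IsCyclic (K ⧸ (P : Subgroup K)) :=
    isCyclic_of_prime_card (by rw [← index_eq_card, hindex])
  obtain ⟨a, b, hab⟩ := hnab
  refine hab (((QuotientGroup.mk' (P : Subgroup K)).isMulCommutative_of_isCyclic_of_ker_le_center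
    ?_).is_comm.comm a b)
  rw [QuotientGroup.ker_mk']
  exact le_center_of_map_diag_normal (hpro.normal_of_le_isMulCommutative (map_diag_le_prod _))
end
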